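/- arXiv:2009.03355 — 3 statements merged into one kernel-verified Lean document; each statement's English description precedes it below -/
import Mathlib

section
/- Let f ∈ ℂ[X] be a monic polynomial of degree 4, let b ∈ ℂ with f(b) ≠ 0, let Υ₀ ∈ ℂ satisfy Υ₀² = f(b), and set Υ₁ = f′(b)/(2Υ₀) and Υ₂ = (2·f(b)·f″(b) − f′(b)²)/(4·f(b)·Υ₀). Then for every x ∈ ℂ with x ≠ b, (Υ₀/(x − b)² + Υ₁/(x − b) + Υ₂/2)² − f(x)/(x − b)⁴ = (Υ₂²/4 − 1) + (Υ₁·Υ₂ − f‴(b)/6)/(x − b), where f′, f″, f‴ are the derivatives of f. -/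
/-!
`(x - b)² B(x) = Υ₀ + Υ₁ (x - b) + (Υ₂ / 2) (x - b)²` is the second-order Taylor polynomial of
`Υ = √f` at `b`, so its square agrees with the Taylor expansion of `f` up to order two. For a monic
quartic only the cubic and quartic Taylor terms of the difference survive, and dividing by
`(x - b)⁴` leaves a constant plus a simple pole.
-/

open Polynomial
open scoped Nat

theorem Polynomial.factorial_mul_taylor_coeff {R : Type*} [CommSemiring R] (r : R) (f : R[X])
    (k : ℕ) : k ! * (taylor r f).coeff k = (derivative^[k] f).eval r := by
  rw [taylor_coeff, ← factorial_smul_hasseDeriv, LinearMap.smul_apply, eval_smul, nsmul_eq_mul]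

theorem Polynomial.Monic.eval_eq_taylor_of_natDegree_eq_four {K : Type*} [Field K] [CharZero K]
    {f : K[X]} (hmonic : f.Monic) (hdeg : f.natDegree = 4) (b x : K) :
    f.eval x = f.eval b + (derivative f).eval b * (x - b)
      + (derivative (derivative f)).eval b / 2 * (x - b) ^ 2
      + (derivative (derivative (derivative f))).eval b / 6 * (x - b) ^ 3 + (x - b) ^ 4 := by
  have hcoeff (k : ℕ) : (taylor b f).coeff k = (derivative^[k] f).eval b / k ! := by
    rw [eq_div_iff (by exact_mod_cast k.factorial_ne_zero), mul_comm, factorial_mul_taylor_coeff]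
  have hlead : (taylor b f).coeff 4 = 1 := by
    rw [← hdeg, coeff_taylor_natDegree, hmonic.leadingCoeff]
  rw [← taylor_eval_sub b, eval_eq_sum_range, natDegree_taylor, hdeg]
  simp only [Finset.sum_range_succ, Finset.sum_range_zero, taylor_coeff_zero, hcoeff 1,
    hcoeff 2, hcoeff 3, hlead]
  norm_num [Nat.factorial]

theorem sq_ansatz_sub_div_pow_four {K : Type*} [Field K] {u₀ u₁ u₂ a₀ a₁ a₂ a₃ t : K}
    (ht : t ≠ 0) (h₀ : u₀ ^ 2 = a₀) (h₁ : 2 * u₀ * u₁ = a₁) (h₂ : u₁ ^ 2 + 2 * u₀ * u₂ = a₂) :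
    (u₀ / t ^ 2 + u₁ / t + u₂) ^ 2 - (a₀ + a₁ * t + a₂ * t ^ 2 + a₃ * t ^ 3 + t ^ 4) / t ^ 4
      = (u₂ ^ 2 - 1) + (2 * u₁ * u₂ - a₃) / t := by
  field_simp
  linear_combination h₀ + t * h₁ + t ^ 2 * h₂

/-- Computational identity for the square of the rational part of the elementary function
with a double pole at `b̂`, for a monic quartic `f`. -/
theorem double_pole_ansatz_square_identity
    (f : Polynomial ℂ) (hmonic : f.Monic) (hdeg : f.natDegree = 4)
    (b : ℂ) (hfb : f.eval b ≠ 0)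
    (Υ0 : ℂ) (hΥ0 : Υ0 ^ 2 = f.eval b)
    (Υ1 : ℂ) (hΥ1 : Υ1 = (derivative f).eval b / (2 * Υ0))
    (Υ2 : ℂ) (hΥ2 : Υ2 = (2 * f.eval b * (derivative (derivative f)).eval b
        - ((derivative f).eval b) ^ 2) / (4 * f.eval b * Υ0)) :
    ∀ x : ℂ, x ≠ b →
      (Υ0 / (x - b) ^ 2 + Υ1 / (x - b) + Υ2 / 2) ^ 2 - f.eval x / (x - b) ^ 4
        = (Υ2 ^ 2 / 4 - 1)
          + (Υ1 * Υ2 - (derivative (derivative (derivative f))).eval b / 6) / (x - b) := by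
  intro x hx
  have hΥ0_ne : Υ0 ≠ 0 := by
    rintro rfl
    exact hfb (by rw [← hΥ0, zero_pow two_ne_zero])
  have h₁ : 2 * Υ0 * Υ1 = (derivative f).eval b := by
    rw [hΥ1]
    field_simp
  have h₂ : Υ1 ^ 2 + 2 * Υ0 * (Υ2 / 2) = (derivative (derivative f)).eval b / 2 := by
    rw [hΥ1, hΥ2, ← hΥ0]
    field_simp
    ring
  rw [hmonic.eval_eq_taylor_of_natDegree_eq_four hdeg b x,
    sq_ansatz_sub_div_pow_four (sub_ne_zero.mpr hx) hΥ0 h₁ h₂]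
  ring
end

section
/- Let f ∈ ℂ[X] be a monic polynomial of degree 4, let b ∈ ℂ with f(b) ≠ 0, let Υ₀ ∈ ℂ satisfy Υ₀² = f(b), and set Υ₁ = f′(b)/(2Υ₀) and Υ₂ = (2·f(b)·f″(b) − f′(b)²)/(4·f(b)·Υ₀). Let η ∈ ℂ be a root of f with η ≠ b, and assume the condition Υ₀/(η − b)² + Υ₁/(η − b) + Υ₂/2 = 0. Then for every x ∈ ℂ with x ≠ b, (Υ₀/(x − b)² + Υ₁/(x − b) + Υ₂/2)² − f(x)/(x − b)⁴ = (Υ₂²/4 − 1)·(x − η)/(x − b). Consequently, for every Υx ∈ ℂ with Υx² = f(x) and x ≠ b, x ≠ η, writing B(x) = Υ₀/(x − b)² + Υ₁/(x − b) + Υ₂/2 and A(x) = Υx/(x − b)², if B(x)² ≠ A(x)² and Υ₂² ≠ 4 then [(x − b)/((x − η)·(A(x) + B(x)))] · [(x − b)/((x − η)·(−A(x) + B(x)))] = (Υ₂²/4 − 1)⁻¹·((x − b)/(x − η))³. -/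
/-! Since `Υ₀ + Υ₁t + (Υ₂/2)t²` is the quadratic Taylor polynomial of `√f(b + t)`, its square
agrees with `f(b + t)` up to order `t²`. Hence `B(x)² − f(x)/(x − b)⁴` is affine in `1/(x − b)`,
with constant term `Υ₂²/4 − 1` coming from the monic `t⁴` term. The Abel condition says that
`B(η) = 0` at the root `η`, which pins down the `1/(x − b)` coefficient and produces the factor
`x − η`. The product formula is then `(x − b)²/((x − η)²(B² − A²))` with `A² = f(x)/(x − b)⁴`. -/

open Polynomial

namespace Polynomial

theorem Monic.eval_eq_of_natDegree_eq_four {R : Type*} [CommSemiring R] {g : R[X]}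
    (hg : g.Monic) (hdeg : g.natDegree = 4) (t : R) :
    g.eval t = g.coeff 0 + g.coeff 1 * t + g.coeff 2 * t ^ 2 + g.coeff 3 * t ^ 3 + t ^ 4 := by
  have h4 : g.coeff 4 = 1 := hdeg ▸ hg.coeff_natDegree
  simp [eval_eq_sum_range, hdeg, Finset.sum_range_succ, h4]

theorem two_mul_taylor_coeff_two {R : Type*} [CommSemiring R] (f : R[X]) (r : R) :
    2 * (taylor r f).coeff 2 = (derivative (derivative f)).eval r := by
  have h := congrArg (eval r) (congrFun (factorial_smul_hasseDeriv (R := R) (k := 2)) f)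
  simpa [taylor_coeff] using h

theorem eval_eq_of_sqrt_taylor_coeffs {K : Type*} [Field K] [NeZero (2 : K)]
    {f : K[X]} (hmonic : f.Monic) (hdeg : f.natDegree = 4) {b Υ0 Υ1 Υ2 : K}
    (hfb : f.eval b ≠ 0) (hΥ0 : Υ0 ^ 2 = f.eval b)
    (hΥ1 : Υ1 = (derivative f).eval b / (2 * Υ0))
    (hΥ2 : Υ2 = (2 * f.eval b * (derivative (derivative f)).eval b
        - ((derivative f).eval b) ^ 2) / (4 * f.eval b * Υ0)) (x : K) :
    f.eval x = Υ0 ^ 2 + 2 * Υ0 * Υ1 * (x - b) + (Υ1 ^ 2 + Υ0 * Υ2) * (x - b) ^ 2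
      + (taylor b f).coeff 3 * (x - b) ^ 3 + (x - b) ^ 4 := by
  have hΥ0ne : Υ0 ≠ 0 := by rintro rfl; exact hfb (by rw [← hΥ0]; ring)
  have hf'b : (derivative f).eval b = 2 * Υ0 * Υ1 := by rw [hΥ1]; field_simp
  have hf''b : (derivative (derivative f)).eval b = 2 * (Υ1 ^ 2 + Υ0 * Υ2) := by
    rw [← hΥ0, hf'b, show (4 : K) = 2 ^ 2 by norm_num] at hΥ2
    field_simp at hΥ2
    linear_combination -hΥ2
  have htaylor : (taylor b f).coeff 2 = Υ1 ^ 2 + Υ0 * Υ2 := by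
    apply mul_left_cancel₀ (two_ne_zero (α := K))
    rw [two_mul_taylor_coeff_two, hf''b]
  rw [← sub_add_cancel x b, ← taylor_eval, Monic.eval_eq_of_natDegree_eq_four
    (by rw [Monic, leadingCoeff_taylor]; exact hmonic) (by rw [natDegree_taylor, hdeg]),
    taylor_coeff_zero, taylor_coeff_one, hf'b, htaylor, hΥ0, add_sub_cancel_right]

end Polynomial

theorem sq_sub_quartic_div_pow_four {K : Type*} [Field K] [NeZero (2 : K)] (Υ0 Υ1 Υ2 c t : K)
    (ht : t ≠ 0) :
    (Υ0 / t ^ 2 + Υ1 / t + Υ2 / 2) ^ 2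
        - (Υ0 ^ 2 + 2 * Υ0 * Υ1 * t + (Υ1 ^ 2 + Υ0 * Υ2) * t ^ 2 + c * t ^ 3 + t ^ 4) / t ^ 4
      = (Υ1 * Υ2 - c) / t + (Υ2 ^ 2 / 4 - 1) := by
  rw [show (4 : K) = 2 ^ 2 by norm_num]
  field_simp
  ring

theorem div_mul_div_eq_of_sq_sub_sq {K : Type*} [Field K] {A B u v β : K}
    (h : B ^ 2 - A ^ 2 = β * v / u) (hBA : B ^ 2 ≠ A ^ 2) :
    u / (v * (A + B)) * (u / (v * (-A + B))) = β⁻¹ * (u / v) ^ 3 := by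
  have hne : β * v / u ≠ 0 := h ▸ sub_ne_zero.mpr hBA
  have hβ : β ≠ 0 := by rintro rfl; simp at hne
  have hv : v ≠ 0 := by rintro rfl; simp at hne
  have hu : u ≠ 0 := by rintro rfl; simp at hne
  calc u / (v * (A + B)) * (u / (v * (-A + B))) = u ^ 2 / (v ^ 2 * (B ^ 2 - A ^ 2)) := by
        rw [div_mul_div_comm]; ring_nf
    _ = β⁻¹ * (u / v) ^ 3 := by rw [h]; field_simp

theorem div_add_eq_mul_sub_div_of_div_add_eq_zero {K : Type*} [Field K] {α β s t : K}
    (hs : s ≠ 0) (ht : t ≠ 0) (h : α / s + β = 0) :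
    α / t + β = β * (t - s) / t := by
  rw [← eq_neg_iff_add_eq_zero, div_eq_iff hs] at h
  rw [h]
  field_simp
  ring

theorem product_formula_basis_functions_general
    (f : Polynomial ℂ) (hmonic : f.Monic) (hdeg : f.natDegree = 4)
    (b : ℂ) (hfb : f.eval b ≠ 0)
    (Υ0 : ℂ) (hΥ0 : Υ0 ^ 2 = f.eval b)
    (Υ1 : ℂ) (hΥ1 : Υ1 = (derivative f).eval b / (2 * Υ0))
    (Υ2 : ℂ) (hΥ2 : Υ2 = (2 * f.eval b * (derivative (derivative f)).eval b
        - ((derivative f).eval b) ^ 2) / (4 * f.eval b * Υ0))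
    (η : ℂ) (hη : f.eval η = 0)
    (hcond : Υ0 / (η - b) ^ 2 + Υ1 / (η - b) + Υ2 / 2 = 0) :
    (∀ x : ℂ, x ≠ b →
      (Υ0 / (x - b) ^ 2 + Υ1 / (x - b) + Υ2 / 2) ^ 2 - f.eval x / (x - b) ^ 4
        = (Υ2 ^ 2 / 4 - 1) * (x - η) / (x - b)) ∧
    (∀ x Υx B A : ℂ, Υx ^ 2 = f.eval x → x ≠ b → x ≠ η →
      B = Υ0 / (x - b) ^ 2 + Υ1 / (x - b) + Υ2 / 2 →
      A = Υx / (x - b) ^ 2 →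
      B ^ 2 ≠ A ^ 2 → Υ2 ^ 2 ≠ 4 →
      ((x - b) / ((x - η) * (A + B))) * ((x - b) / ((x - η) * (-A + B)))
        = (Υ2 ^ 2 / 4 - 1)⁻¹ * ((x - b) / (x - η)) ^ 3) := by
  have hexp := eval_eq_of_sqrt_taylor_coeffs hmonic hdeg hfb hΥ0 hΥ1 hΥ2
  have hres : ∀ x, x ≠ b →
      (Υ0 / (x - b) ^ 2 + Υ1 / (x - b) + Υ2 / 2) ^ 2 - f.eval x / (x - b) ^ 4
        = (Υ1 * Υ2 - (taylor b f).coeff 3) / (x - b) + (Υ2 ^ 2 / 4 - 1) := fun x hx => by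
    rw [hexp x]
    exact sq_sub_quartic_div_pow_four _ _ _ _ _ (sub_ne_zero.mpr hx)
  have hηb : η ≠ b := fun h => hfb (h ▸ hη)
  have hresη := hres η hηb
  rw [hcond, hη, zero_div, zero_pow two_ne_zero, sub_zero, eq_comm] at hresη
  have hsq : ∀ x, x ≠ b →
      (Υ0 / (x - b) ^ 2 + Υ1 / (x - b) + Υ2 / 2) ^ 2 - f.eval x / (x - b) ^ 4
        = (Υ2 ^ 2 / 4 - 1) * (x - η) / (x - b) := fun x hx => by
    rw [hres x hx, div_add_eq_mul_sub_div_of_div_add_eq_zero (sub_ne_zero.mpr hηb)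
      (sub_ne_zero.mpr hx) hresη, sub_sub_sub_cancel_right]
  refine ⟨hsq, fun x Υx B A hΥx hxb _ hB hA hBA _ => div_mul_div_eq_of_sq_sub_sq ?_ hBA⟩
  rw [hB, hA, div_pow, hΥx, ← pow_mul]
  exact hsq x hxb

/-- Under the Abel condition at a root `η` of the monic quartic `f`, the square of the
rational part of the elementary function factors as `(Υ₂²/4 − 1)(x − η)/(x − b)`, and the
product formula `(F₁F₂)³ = G₁G₂ = (Υ₂²/4 − 1)⁻¹((x − b)/(x − η))³` holds. -/
theorem product_formula_basis_functions
    (f : Polynomial ℂ) (hmonic : f.Monic) (hdeg : f.natDegree = 4)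
    (b : ℂ) (hfb : f.eval b ≠ 0)
    (Υ0 : ℂ) (hΥ0 : Υ0 ^ 2 = f.eval b)
    (Υ1 : ℂ) (hΥ1 : Υ1 = (derivative f).eval b / (2 * Υ0))
    (Υ2 : ℂ) (hΥ2 : Υ2 = (2 * f.eval b * (derivative (derivative f)).eval b
        - ((derivative f).eval b) ^ 2) / (4 * f.eval b * Υ0))
    (η : ℂ) (hη : f.eval η = 0) (hηb : η ≠ b)
    (hcond : Υ0 / (η - b) ^ 2 + Υ1 / (η - b) + Υ2 / 2 = 0) :
    (∀ x : ℂ, x ≠ b →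
      (Υ0 / (x - b) ^ 2 + Υ1 / (x - b) + Υ2 / 2) ^ 2 - f.eval x / (x - b) ^ 4
        = (Υ2 ^ 2 / 4 - 1) * (x - η) / (x - b)) ∧
    (∀ x Υx B A : ℂ, Υx ^ 2 = f.eval x → x ≠ b → x ≠ η →
      B = Υ0 / (x - b) ^ 2 + Υ1 / (x - b) + Υ2 / 2 →
      A = Υx / (x - b) ^ 2 →
      B ^ 2 ≠ A ^ 2 → Υ2 ^ 2 ≠ 4 →
      ((x - b) / ((x - η) * (A + B))) * ((x - b) / ((x - η) * (-A + B)))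
        = (Υ2 ^ 2 / 4 - 1)⁻¹ * ((x - b) / (x - η)) ^ 3) :=
  product_formula_basis_functions_general f hmonic hdeg b hfb Υ0 hΥ0 Υ1 hΥ1 Υ2 hΥ2 η hη hcond
end

section
/- Let K ∈ ℂ with Im(K²) ≠ 0 and let v : ℤ × ℤ → ℂ be such that: (i) the function (m,n) ↦ ‖v(m,n)‖² is summable over ℤ × ℤ (v is square-summable); (ii) v(m,n) = 0 whenever m ≥ 0 and n ≥ 0 (Dirichlet condition on the boundary of the blocked first quadrant, and vanishing inside it); (iii) the discrete Helmholtz equation v(m,n−1) + v(m,n+1) + v(m−1,n) + v(m+1,n) + (K² − 4)·v(m,n) = 0 holds at every node (m,n) with m < 0 or n < 0. Then v is identically zero. -/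
/-!
Multiply the equation by `conj v` and sum over all of `ℤ²`; this is legitimate because `v` vanishes
wherever the equation is not imposed. Reindexing shows that each pair of opposite neighbour terms
`∑ (v (p - e) + v (p + e)) * conj (v p)` is real, so the imaginary part of the summed identity is
`Im (K²) * ‖v‖₂² = 0`.
-/

open ComplexConjugate

section Correlation

variable {G : Type*} [AddCommGroup G] {v : G → ℂ}

theorem summable_mul_conj_shift (hv : Summable fun p => ‖v p‖ ^ 2) (e : G) :
    Summable fun p => v (p + e) * conj (v p) := by
  have hshift : Summable fun p => ‖v (p + e)‖ ^ 2 :=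
    ((Equiv.addRight e).summable_iff (f := fun p => ‖v p‖ ^ 2)).2 hv
  refine Summable.of_norm_bounded (g := fun p => (‖v (p + e)‖ ^ 2 + ‖v p‖ ^ 2) / 2)
    ((hshift.add hv).div_const 2) fun p => ?_
  rw [norm_mul, RCLike.norm_conj]
  nlinarith [sq_nonneg (‖v (p + e)‖ - ‖v p‖)]

theorem tsum_shift_sub_mul_conj (v : G → ℂ) (e : G) :
    ∑' p, v (p - e) * conj (v p) = conj (∑' p, v (p + e) * conj (v p)) := by
  rw [← (Equiv.addRight e).tsum_eq, starRingEnd_apply, tsum_star]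
  refine tsum_congr fun p => ?_
  simp only [Equiv.coe_addRight, add_sub_cancel_right, starRingEnd_apply, star_mul', star_star]
  ring

theorem im_tsum_shift_add_shift_mul_conj (hv : Summable fun p => ‖v p‖ ^ 2) (e : G) :
    (∑' p, (v (p - e) + v (p + e)) * conj (v p)).im = 0 := by
  have hsub : Summable fun p => v (p - e) * conj (v p) := by
    simpa only [sub_eq_add_neg] using summable_mul_conj_shift hv (-e)
  simp only [add_mul]
  rw [hsub.tsum_add (summable_mul_conj_shift hv e), tsum_shift_sub_mul_conj, Complex.add_im,
    Complex.conj_im, neg_add_cancel]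

end Correlation

theorem tsum_mul_conj_self {α : Type*} (v : α → ℂ) :
    ∑' p, v p * conj (v p) = ((∑' p, ‖v p‖ ^ 2 : ℝ) : ℂ) := by
  simp only [Complex.mul_conj', Complex.ofReal_tsum, Complex.ofReal_pow]

def helmholtz (K : ℂ) (v : ℤ × ℤ → ℂ) (p : ℤ × ℤ) : ℂ :=
  v (p - (0, 1)) + v (p + (0, 1)) + v (p - (1, 0)) + v (p + (1, 0)) + (K ^ 2 - 4) * v p

theorem im_tsum_helmholtz_mul_conj (K : ℂ) {v : ℤ × ℤ → ℂ} (hv : Summable fun p => ‖v p‖ ^ 2) :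
    (∑' p, helmholtz K v p * conj (v p)).im = (K ^ 2).im * ∑' p, ‖v p‖ ^ 2 := by
  have hsq : Summable fun p => v p * conj (v p) := by
    simpa only [add_zero] using summable_mul_conj_shift hv 0
  have hpair : ∀ e : ℤ × ℤ, Summable fun p => (v (p - e) + v (p + e)) * conj (v p) := fun e => by
    simpa only [sub_eq_add_neg, add_mul] using
      (summable_mul_conj_shift hv (-e)).add (summable_mul_conj_shift hv e)
  have hsplit : ∑' p, helmholtz K v p * conj (v p)
      = ∑' p, (v (p - (0, 1)) + v (p + (0, 1))) * conj (v p)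
        + ∑' p, (v (p - (1, 0)) + v (p + (1, 0))) * conj (v p)
        + (K ^ 2 - 4) * ∑' p, v p * conj (v p) := by
    rw [← tsum_mul_left, ← (hpair _).tsum_add (hpair _), ← ((hpair _).add (hpair _)).tsum_add
      (hsq.mul_left _)]
    exact tsum_congr fun p => by simp only [helmholtz]; ring
  rw [hsplit, Complex.add_im, Complex.add_im, im_tsum_shift_add_shift_mul_conj hv,
    im_tsum_shift_add_shift_mul_conj hv, tsum_mul_conj_self, Complex.im_mul_ofReal,
    Complex.sub_im, Complex.im_ofNat]
  ring

/-- Uniqueness of the square-summable solution of the Dirichlet diffraction problem: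
if `Im K² ≠ 0` and `v ∈ l²(ℤ²)` vanishes on the (closed) first quadrant and satisfies the
discrete Helmholtz equation at every node outside it, then `v ≡ 0`. -/
theorem diffraction_uniqueness
    (K : ℂ) (hK : (K ^ 2).im ≠ 0)
    (v : ℤ × ℤ → ℂ)
    (hsum : Summable (fun p : ℤ × ℤ => ‖v p‖ ^ 2))
    (hzero : ∀ m n : ℤ, 0 ≤ m → 0 ≤ n → v (m, n) = 0)
    (heq : ∀ m n : ℤ, (m < 0 ∨ n < 0) →
      v (m, n - 1) + v (m, n + 1) + v (m - 1, n) + v (m + 1, n)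
        + (K ^ 2 - 4) * v (m, n) = 0) :
    ∀ p : ℤ × ℤ, v p = 0 := by
  have hpointwise : ∀ p, helmholtz K v p * conj (v p) = 0 := by
    rintro ⟨m, n⟩
    by_cases hout : m < 0 ∨ n < 0
    · have hmn : helmholtz K v (m, n) = 0 := by simpa [helmholtz] using heq m n hout
      rw [hmn, zero_mul]
    · push Not at hout
      simp [hzero m n hout.1 hout.2]
  have hnorm : ∑' p, ‖v p‖ ^ 2 = 0 := by
    have h := im_tsum_helmholtz_mul_conj K hsum
    rwa [tsum_congr hpointwise, tsum_zero, Complex.zero_im, eq_comm, mul_eq_zero,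
      or_iff_right hK] at h
  have hzero_sq := (hasSum_zero_iff_of_nonneg fun p => sq_nonneg ‖v p‖).1 (hnorm ▸ hsum.hasSum)
  exact fun p => norm_eq_zero.1 (pow_eq_zero_iff two_ne_zero |>.1 (congrFun hzero_sq p))
end
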